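/- Let X₁, …, Xₙ be independent nonnegative integrable random variables with 𝔼(X_i·log*(X_i)) < ∞ for every i, let S_n = X₁ + … + Xₙ, and let (ℱ_k) be the natural filtration ℱ_k = σ(X₁, …, X_k). Then for every integer 0 ≤ q ≤ n, almost surely 𝔼(S_n·log*(S_n) | ℱ_{n−q}) ≤ 𝔼(S_n | ℱ_{n−q})·log*(𝔼(S_n | ℱ_{n−q})) + Σ_{i=1}^n 𝔼(X_i·log*(X_i) | ℱ_{n−q}). -/

import Mathlib

open MeasureTheory ProbabilityTheory
open scoped ENNReal

noncomputable section

/-- The function `log*`: `log* x = x / e` for `x ≤ e` and `log* x = log x` for `x > e`. -/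
def logStar (x : ℝ) : ℝ := if x ≤ Real.exp 1 then x / Real.exp 1 else Real.log x

/-- The natural filtration `ℱ_k = σ(X₁, …, X_k)` of a finite family of real random
variables `X : Fin n → Ω → ℝ` (the index `i : Fin n` represents `X_{i+1}`). -/
def natFiltration {Ω : Type*} [MeasurableSpace Ω] {n : ℕ} (X : Fin n → Ω → ℝ)
    (k : ℕ) : MeasurableSpace Ω :=
  ⨆ i : Fin n, ⨆ _ : (i : ℕ) < k, MeasurableSpace.comap (X i) inferInstance

/-!
Write `S = ∑ Xᵢ` and `ℱ = ℱ_{n-q}`. Since `log*` is subadditive on `[0, ∞)`,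
`S log* S = ∑ Xᵢ log* S ≤ ∑ Xᵢ log* Xᵢ + ∑ Xᵢ log* (S - Xᵢ)`.
The function `log*` is concave, so `log* (S - Xᵢ)` lies below its tangent line at the
`ℱ`-measurable point `𝔼(S - Xᵢ | ℱ)`; taking `𝔼(Xᵢ · | ℱ)` of that bound gives
`𝔼(Xᵢ log* (S - Xᵢ) | ℱ) ≤ 𝔼(Xᵢ | ℱ) log* 𝔼(S - Xᵢ | ℱ)` as soon as
`𝔼(Xᵢ (S - Xᵢ) | ℱ) ≤ 𝔼(Xᵢ | ℱ) 𝔼(S - Xᵢ | ℱ)`. For independent variables and the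
natural filtration this holds with equality: either `Xᵢ` is `ℱ`-measurable, or `Xᵢ` is
independent of `σ(Xⱼ : j ≠ i) ⊇ ℱ`. Monotonicity of `log*` and `∑ 𝔼(Xᵢ | ℱ) = 𝔼(S | ℱ)`
conclude. All the terms are integrable thanks to `x log* y ≤ x log* x + y`.
-/

open Real

-- The derivative of `logStar`, which is `C¹` since both branches have slope `1/e` at `e`.
def logStarSlope (y : ℝ) : ℝ := if y ≤ exp 1 then (exp 1)⁻¹ else y⁻¹

lemma logStar_of_le {x : ℝ} (h : x ≤ exp 1) : logStar x = x / exp 1 := if_pos h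

lemma logStar_of_gt {x : ℝ} (h : exp 1 < x) : logStar x = log x := if_neg h.not_ge

lemma logStarSlope_of_le {y : ℝ} (h : y ≤ exp 1) : logStarSlope y = (exp 1)⁻¹ := if_pos h

lemma logStarSlope_of_gt {y : ℝ} (h : exp 1 < y) : logStarSlope y = y⁻¹ := if_neg h.not_ge

lemma log_le_div_exp_one {x : ℝ} (hx : 0 < x) : log x ≤ x / exp 1 := by
  have h := log_le_sub_one_of_pos (div_pos hx (exp_pos 1))
  rw [log_div hx.ne' (exp_pos 1).ne', log_exp] at h
  linarith

lemma logStar_le_div (x : ℝ) : logStar x ≤ x / exp 1 := by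
  unfold logStar
  split_ifs with h
  · rfl
  · exact log_le_div_exp_one ((exp_pos 1).trans (not_le.1 h))

lemma logStar_nonneg {x : ℝ} (hx : 0 ≤ x) : 0 ≤ logStar x := by
  unfold logStar
  split_ifs with h
  · positivity
  · exact log_nonneg ((one_le_exp zero_le_one).trans (not_le.1 h).le)

lemma monotone_logStar : Monotone logStar := by
  intro x y hxy
  have he := exp_pos 1
  unfold logStar
  split_ifs with hx hy hy
  · exact div_le_div_of_nonneg_right hxy he.le
  · calc x / exp 1 ≤ 1 := (div_le_one he).2 hx
      _ = log (exp 1) := (log_exp 1).symm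
      _ ≤ log y := log_le_log he (not_le.1 hy).le
  · exact absurd (hxy.trans hy) hx
  · exact log_le_log (he.trans (not_le.1 hx)) hxy

lemma measurable_logStar : Measurable logStar :=
  Measurable.ite (measurableSet_le measurable_id measurable_const)
    (measurable_id.div_const _) measurable_log

lemma measurable_logStarSlope : Measurable logStarSlope :=
  Measurable.ite (measurableSet_le measurable_id measurable_const) measurable_const measurable_inv

lemma logStarSlope_nonneg (y : ℝ) : 0 ≤ logStarSlope y := by
  unfold logStarSlope
  split_ifs with h
  · positivity
  · exact inv_nonneg.2 ((exp_pos 1).trans (not_le.1 h)).le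

lemma logStarSlope_le (y : ℝ) : logStarSlope y ≤ (exp 1)⁻¹ := by
  unfold logStarSlope
  split_ifs with h
  · rfl
  · exact inv_anti₀ (exp_pos 1) (not_le.1 h).le

lemma logStarSlope_mul_self_le_one (y : ℝ) : logStarSlope y * y ≤ 1 := by
  unfold logStarSlope
  split_ifs with h
  · rw [inv_mul_le_iff₀ (exp_pos 1)]; linarith
  · rw [inv_mul_cancel₀ ((exp_pos 1).trans (not_le.1 h)).ne']

lemma logStar_le_tangent (x y : ℝ) : logStar x ≤ logStar y + logStarSlope y * (x - y) := by
  have he := exp_pos 1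
  rcases le_or_gt y (exp 1) with hy | hy
  · rw [logStar_of_le hy, logStarSlope_of_le hy]
    calc logStar x ≤ x / exp 1 := logStar_le_div x
      _ = y / exp 1 + (exp 1)⁻¹ * (x - y) := by field_simp; ring
  have hy0 : 0 < y := he.trans hy
  rw [logStar_of_gt hy, logStarSlope_of_gt hy]
  have hlog : ∀ z, 0 < z → log z ≤ log y + y⁻¹ * (z - y) := fun z hz => by
    have h := log_le_sub_one_of_pos (div_pos hz hy0)
    rw [log_div hz.ne' hy0.ne'] at h
    have : z / y - 1 = y⁻¹ * (z - y) := by field_simp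
    linarith
  rcases le_or_gt x (exp 1) with hx | hx
  · -- `x / e` minus the tangent line is increasing in `x`, and at `x = e` it is nonpositive
    -- because `log (e / y) ≤ e / y - 1`.
    rw [logStar_of_le hx]
    have h1 := hlog (exp 1) he
    rw [log_exp] at h1
    have h2 : x * ((exp 1)⁻¹ - y⁻¹) ≤ exp 1 * ((exp 1)⁻¹ - y⁻¹) :=
      mul_le_mul_of_nonneg_right hx (sub_nonneg.2 (inv_anti₀ he hy.le))
    have h3 : exp 1 * (exp 1)⁻¹ = 1 := mul_inv_cancel₀ he.ne'
    rw [div_eq_mul_inv]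
    nlinarith
  · rw [logStar_of_gt hx]
    exact hlog x (he.trans hx)

lemma div_le_logStar {a b : ℝ} (hb : 0 ≤ b) (hba : b ≤ a) (ha : exp 1 < a) :
    b / a ≤ logStar b := by
  have he := exp_pos 1
  unfold logStar
  split_ifs with h
  · exact div_le_div_of_nonneg_left hb he ha.le
  · calc b / a ≤ 1 := (div_le_one (he.trans ha)).2 hba
      _ = log (exp 1) := (log_exp 1).symm
      _ ≤ log b := log_le_log he (not_le.1 h).le

lemma logStar_add_le {a b : ℝ} (ha : 0 ≤ a) (hb : 0 ≤ b) :
    logStar (a + b) ≤ logStar a + logStar b := by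
  wlog hba : b ≤ a generalizing a b
  · rw [add_comm a, add_comm (logStar a)]
    exact this hb ha (not_le.1 hba).le
  rcases le_or_gt a (exp 1) with hae | hae
  · have hbe : b ≤ exp 1 := hba.trans hae
    rw [logStar_of_le hae, logStar_of_le hbe, ← add_div]
    exact logStar_le_div _
  · have ht := logStar_le_tangent (a + b) a
    rw [logStarSlope_of_gt hae, add_sub_cancel_left, inv_mul_eq_div] at ht
    linarith [div_le_logStar hb hba hae]

lemma mul_logStar_le {x y : ℝ} (hx : 0 ≤ x) (hy : 0 ≤ y) :
    x * logStar y ≤ x * logStar x + y := by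
  have hxx := mul_nonneg hx (logStar_nonneg hx)
  rcases le_or_gt x (exp 1) with hxe | hxe
  · calc x * logStar y ≤ x * (y / exp 1) := mul_le_mul_of_nonneg_left (logStar_le_div y) hx
      _ ≤ y := by
        rw [mul_div_left_comm]
        exact mul_le_of_le_one_right hy ((div_le_one (exp_pos 1)).2 hxe)
      _ ≤ x * logStar x + y := by linarith
  · have ht := mul_le_mul_of_nonneg_left (logStar_le_tangent y x) hx
    rw [logStarSlope_of_gt hxe, mul_add, ← mul_assoc,
      mul_inv_cancel₀ ((exp_pos 1).trans hxe).ne'] at ht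
    linarith

lemma sum_sub_nonneg {ι α : Type*} [Fintype ι] [AddCommGroup α] [PartialOrder α]
    [IsOrderedAddMonoid α] {x : ι → α} (hx : ∀ i, 0 ≤ x i) (i : ι) : 0 ≤ ∑ j, x j - x i :=
  sub_nonneg.2 (Finset.single_le_sum (fun j _ => hx j) (Finset.mem_univ i))

lemma sum_mul_logStar_le {ι : Type*} [Fintype ι] {x : ι → ℝ} (hx : ∀ i, 0 ≤ x i) :
    (∑ i, x i) * logStar (∑ i, x i)
      ≤ ∑ i, (x i * logStar (x i) + x i * logStar (∑ j, x j - x i)) := by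
  rw [Finset.sum_mul]
  refine Finset.sum_le_sum fun i _ => ?_
  have h := logStar_add_le (hx i) (sum_sub_nonneg hx i)
  rw [add_sub_cancel] at h
  simpa only [mul_add] using mul_le_mul_of_nonneg_left h (hx i)

section ConditionalExpectation

variable {Ω : Type*} {m m0 : MeasurableSpace Ω} {μ : Measure Ω}

lemma integrable_mul_logStar {W Z : Ω → ℝ} (hW : 0 ≤ W) (hZ : 0 ≤ᵐ[μ] Z)
    (hWm : AEStronglyMeasurable W μ) (hWW : Integrable (fun ω => W ω * logStar (W ω)) μ)
    (hZi : Integrable Z μ) : Integrable (fun ω => W ω * logStar (Z ω)) μ := by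
  refine Integrable.mono' (hWW.add hZi)
    (hWm.mul (measurable_logStar.comp_aemeasurable hZi.aemeasurable).aestronglyMeasurable) ?_
  filter_upwards [hZ] with ω hZω
  rw [Real.norm_eq_abs, abs_of_nonneg (mul_nonneg (hW ω) (logStar_nonneg hZω))]
  exact mul_logStar_le (hW ω) hZω

theorem condExp_mul_logStar_le_tangent {W Z V : Ω → ℝ} (hW : 0 ≤ W) (hZ : 0 ≤ Z)
    (hWi : Integrable W μ) (hZi : Integrable Z μ) (hWZ : Integrable (W * Z) μ)
    (hWW : Integrable (fun ω => W ω * logStar (W ω)) μ) (hVm : StronglyMeasurable[m] V)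
    (hV : 0 ≤ᵐ[μ] V) (hVi : Integrable V μ) :
    μ[fun ω => W ω * logStar (Z ω) | m] ≤ᵐ[μ] fun ω =>
      μ[W | m] ω * logStar (V ω) + logStarSlope (V ω) * (μ[W * Z | m] ω - μ[W | m] ω * V ω) := by
  have hWL : Integrable (W * (logStar ∘ V)) μ :=
    integrable_mul_logStar hW hV hWi.aestronglyMeasurable hWW hVi
  have hWZD : Integrable (W * Z * (logStarSlope ∘ V)) μ :=
    hWZ.mul_bdd (measurable_logStarSlope.comp_aemeasurable hVi.aemeasurable).aestronglyMeasurable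
      (c := (Real.exp 1)⁻¹) <| ae_of_all _ fun ω => by
        change |logStarSlope (V ω)| ≤ _
        rw [abs_of_nonneg (logStarSlope_nonneg _)]
        exact logStarSlope_le _
  have hWDV : Integrable (W * ((logStarSlope ∘ V) * V)) μ :=
    hWi.mul_bdd ((measurable_logStarSlope.comp_aemeasurable hVi.aemeasurable).mul
      hVi.aemeasurable).aestronglyMeasurable (c := 1) <| by
        filter_upwards [hV] with ω hVω
        change |logStarSlope (V ω) * V ω| ≤ _
        rw [abs_of_nonneg (mul_nonneg (logStarSlope_nonneg _) hVω)]
        exact logStarSlope_mul_self_le_one _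
  have htangent : (fun ω => W ω * logStar (Z ω))
      ≤ W * (logStar ∘ V) + W * Z * (logStarSlope ∘ V) - W * ((logStarSlope ∘ V) * V) :=
    fun ω => by
      have := mul_le_mul_of_nonneg_left (logStar_le_tangent (Z ω) (V ω)) (hW ω)
      simp only [Pi.add_apply, Pi.sub_apply, Pi.mul_apply, Function.comp_apply]
      linarith
  filter_upwards [condExp_mono
      (integrable_mul_logStar hW (ae_of_all _ hZ) hWi.aestronglyMeasurable hWW hZi)
      ((hWL.add hWZD).sub hWDV) (ae_of_all _ htangent),
    condExp_add hWL hWZD m, condExp_sub (hWL.add hWZD) hWDV m,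
    condExp_mul_of_stronglyMeasurable_right
      (measurable_logStar.comp hVm.measurable).stronglyMeasurable hWL hWi,
    condExp_mul_of_stronglyMeasurable_right
      (measurable_logStarSlope.comp hVm.measurable).stronglyMeasurable hWZD hWZ,
    condExp_mul_of_stronglyMeasurable_right
      ((measurable_logStarSlope.comp hVm.measurable).mul hVm.measurable).stronglyMeasurable
      hWDV hWi] with ω h h₁ h₂ h₃ h₄ h₅
  simp only [Pi.add_apply, Pi.sub_apply] at h₁ h₂
  rw [h₂, h₁, h₃, h₄, h₅] at h
  simp only [Pi.mul_apply, Function.comp_apply] at h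
  linarith

theorem condExp_mul_logStar_le {W Z : Ω → ℝ} (hW : 0 ≤ W) (hZ : 0 ≤ Z)
    (hWi : Integrable W μ) (hZi : Integrable Z μ) (hWZ : Integrable (W * Z) μ)
    (hWW : Integrable (fun ω => W ω * logStar (W ω)) μ)
    (hcorr : μ[W * Z | m] ≤ᵐ[μ] μ[W | m] * μ[Z | m]) :
    μ[fun ω => W ω * logStar (Z ω) | m] ≤ᵐ[μ] fun ω => μ[W | m] ω * logStar (μ[Z | m] ω) := by
  filter_upwards [condExp_mul_logStar_le_tangent hW hZ hWi hZi hWZ hWW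
    (stronglyMeasurable_condExp (m := m)) (condExp_nonneg (ae_of_all _ hZ)) integrable_condExp,
    hcorr] with ω h hcorrω
  rw [Pi.mul_apply] at hcorrω
  have := mul_nonpos_of_nonneg_of_nonpos (logStarSlope_nonneg (μ[Z | m] ω))
    (sub_nonpos.2 hcorrω)
  linarith

theorem condExp_mul_logStar_sum_sub_le {ι : Type*} [Fintype ι] {X : ι → Ω → ℝ}
    (hX : ∀ i, 0 ≤ X i) (hXi : ∀ i, Integrable (X i) μ) {i : ι}
    (hXX : Integrable (fun ω => X i ω * logStar (X i ω)) μ)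
    (hXR : Integrable (X i * (∑ j, X j - X i)) μ)
    (hcorr : μ[X i * (∑ j, X j - X i) | m] ≤ᵐ[μ] μ[X i | m] * μ[∑ j, X j - X i | m]) :
    μ[fun ω => X i ω * logStar ((∑ j, X j - X i) ω) | m]
      ≤ᵐ[μ] fun ω => μ[X i | m] ω * logStar (μ[∑ j, X j | m] ω) := by
  have hS := integrable_finsetSum' Finset.univ fun j _ => hXi j
  filter_upwards [condExp_mul_logStar_le (hX i) (sum_sub_nonneg hX i) (hXi i) (hS.sub (hXi i))
      hXR hXX hcorr, condExp_sub hS (hXi i) m, condExp_nonneg (m := m) (ae_of_all μ (hX i))]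
    with ω hJensen hsub hXi0
  refine hJensen.trans (mul_le_mul_of_nonneg_left (monotone_logStar ?_) hXi0)
  rw [hsub, Pi.sub_apply]
  exact sub_le_self _ hXi0

theorem condExp_sum_mul_logStar_le_of_condExp_mul_le {ι : Type*} [Fintype ι] {X : ι → Ω → ℝ}
    (hX : ∀ i, 0 ≤ X i) (hXi : ∀ i, Integrable (X i) μ)
    (hXX : ∀ i, Integrable (fun ω => X i ω * logStar (X i ω)) μ)
    (hXR : ∀ i, Integrable (X i * (∑ j, X j - X i)) μ)
    (hcorr : ∀ i, μ[X i * (∑ j, X j - X i) | m] ≤ᵐ[μ] μ[X i | m] * μ[∑ j, X j - X i | m]) :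
    ∀ᵐ ω ∂μ, μ[fun ω' => (∑ i, X i ω') * logStar (∑ i, X i ω') | m] ω
      ≤ μ[fun ω' => ∑ i, X i ω' | m] ω * logStar (μ[fun ω' => ∑ i, X i ω' | m] ω)
        + ∑ i, μ[fun ω' => X i ω' * logStar (X i ω') | m] ω := by
  rw [← Finset.sum_fn]
  set f : ι → Ω → ℝ := fun i ω => X i ω * logStar (X i ω)
  set g : ι → Ω → ℝ := fun i ω => X i ω * logStar ((∑ j, X j - X i) ω)
  have hg : ∀ i, Integrable (g i) μ := fun i =>
    integrable_mul_logStar (hX i) (ae_of_all _ (sum_sub_nonneg hX i))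
      (hXi i).aestronglyMeasurable (hXX i) ((integrable_finsetSum' _ fun j _ => hXi j).sub (hXi i))
  have hfg : Integrable (∑ i, (f i + g i)) μ :=
    integrable_finsetSum' _ fun i _ => (hXX i).add (hg i)
  have hsplit : (fun ω => (∑ i, X i ω) * logStar (∑ i, X i ω)) ≤ ∑ i, (f i + g i) := fun ω => by
    simpa only [f, g, Finset.sum_apply, Pi.add_apply, Pi.sub_apply] using
      sum_mul_logStar_le fun i => hX i ω
  have hSS : Integrable (fun ω => (∑ i, X i ω) * logStar (∑ i, X i ω)) μ := by
    have hSi := integrable_finsetSum Finset.univ fun j _ => hXi j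
    refine hfg.mono' (hSi.aestronglyMeasurable.mul
      (measurable_logStar.comp_aemeasurable hSi.aemeasurable).aestronglyMeasurable)
      (ae_of_all _ fun ω => ?_)
    have hS0 : 0 ≤ ∑ i, X i ω := Finset.sum_nonneg fun i _ => hX i ω
    rw [Real.norm_eq_abs, abs_of_nonneg (mul_nonneg hS0 (logStar_nonneg hS0))]
    exact hsplit ω
  filter_upwards [condExp_mono hSS hfg (ae_of_all _ hsplit),
    condExp_finsetSum (s := Finset.univ) (f := fun i => f i + g i)
      (fun i _ => (hXX i).add (hg i)) m,
    ae_all_iff.2 fun i => condExp_add (hXX i) (hg i) m,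
    condExp_finsetSum (s := Finset.univ) (fun i _ => hXi i) m,
    ae_all_iff.2 fun i => condExp_mul_logStar_sum_sub_le hX hXi (hXX i) (hXR i) (hcorr i)]
    with ω hmono hsum hadd hY hg_le
  rw [hsum, Finset.sum_apply] at hmono
  calc _ ≤ _ := hmono
    _ ≤ ∑ i, (μ[f i | m] ω + μ[X i | m] ω * logStar (μ[∑ j, X j | m] ω)) :=
      Finset.sum_le_sum fun i _ => (hadd i).trans_le (add_le_add le_rfl (hg_le i))
    _ = _ := by
      rw [Finset.sum_add_distrib, ← Finset.sum_mul, hY, Finset.sum_apply, add_comm]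

theorem condExp_mul_eq_mul_condExp_of_indep [IsFiniteMeasure μ] {mX F G : MeasurableSpace Ω}
    (hmX : mX ≤ m0) (hFG : F ≤ G) (hG : G ≤ m0) {X T : Ω → ℝ} (hX : StronglyMeasurable[mX] X)
    (hT : StronglyMeasurable[G] T) (hindep : Indep mX G μ) (hXi : Integrable X μ)
    (hXT : Integrable (X * T) μ) :
    μ[X * T | F] =ᵐ[μ] μ[X | F] * μ[T | F] := by
  have hXG : μ[X * T | G] =ᵐ[μ] (μ[X]) • T := by
    filter_upwards [condExp_mul_of_stronglyMeasurable_right hT hXT hXi,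
      condExp_indep_eq hmX hG hX hindep] with ω h₁ h₂
    rw [h₁, Pi.mul_apply, h₂, Pi.smul_apply, smul_eq_mul]
  filter_upwards [(condExp_condExp_of_le hFG hG).symm.trans (condExp_congr_ae hXG),
    condExp_smul (μ := μ) (μ[X]) T F,
    condExp_indep_eq hmX (hFG.trans hG) hX (indep_of_indep_of_le_right hindep hFG)]
    with ω h₁ h₂ h₃
  rw [h₁, h₂, Pi.mul_apply, h₃, Pi.smul_apply, smul_eq_mul]

theorem ProbabilityTheory.iIndepFun.integrable_mul_sum_sub {ι : Type*} [Fintype ι]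
    {X : ι → Ω → ℝ} (hmeas : ∀ i, Measurable (X i)) (hindep : iIndepFun X μ)
    (hXi : ∀ i, Integrable (X i) μ) (i : ι) : Integrable (X i * (∑ j, X j - X i)) μ := by
  classical
  rw [← Finset.sum_erase_eq_sub (Finset.mem_univ i)]
  exact (hindep.indepFun_finsetSum_of_notMem hmeas (Finset.notMem_erase i _)).symm.integrable_mul
    (hXi i) (integrable_finsetSum' _ fun j _ => hXi j)

theorem condExp_mul_sum_sub_of_le_iSup_ne [IsFiniteMeasure μ] {ι : Type*} [Fintype ι]
    {X : ι → Ω → ℝ} (hmeas : ∀ i, Measurable (X i)) (hindep : iIndepFun X μ)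
    (hXi : ∀ i, Integrable (X i) μ) (i : ι) {F : MeasurableSpace Ω}
    (hF : F ≤ ⨆ (j) (_ : j ≠ i), MeasurableSpace.comap (X j) inferInstance) :
    μ[X i * (∑ j, X j - X i) | F] =ᵐ[μ] μ[X i | F] * μ[∑ j, X j - X i | F] := by
  classical
  have hG : ⨆ (j) (_ : j ≠ i), MeasurableSpace.comap (X j) inferInstance ≤ m0 :=
    iSup₂_le fun j _ => (hmeas j).comap_le
  have hindepG : Indep (MeasurableSpace.comap (X i) inferInstance)
      (⨆ (j) (_ : j ≠ i), MeasurableSpace.comap (X j) inferInstance) μ := by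
    simpa using indep_biSup_compl (fun j => (hmeas j).comap_le) hindep {i}
  have hRG : StronglyMeasurable[⨆ (j) (_ : j ≠ i), MeasurableSpace.comap (X j) inferInstance]
      (∑ j, X j - X i) := by
    rw [← Finset.sum_erase_eq_sub (Finset.mem_univ i)]
    refine Finset.stronglyMeasurable_sum _ fun j hj =>
      ((comap_measurable (X j)).mono ?_ le_rfl).stronglyMeasurable
    exact le_iSup₂_of_le (f := fun j (_ : j ≠ i) => MeasurableSpace.comap (X j) inferInstance)
      j (Finset.ne_of_mem_erase hj) le_rfl
  exact condExp_mul_eq_mul_condExp_of_indep (hmeas i).comap_le hF hG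
    (comap_measurable (X i)).stronglyMeasurable hRG hindepG (hXi i)
    (hindep.integrable_mul_sum_sub hmeas hXi i)

end ConditionalExpectation

section NaturalFiltration

variable {Ω : Type*} [MeasurableSpace Ω] {n : ℕ} {X : Fin n → Ω → ℝ}

lemma natFiltration_le (hmeas : ∀ i, Measurable (X i)) (k : ℕ) :
    natFiltration X k ≤ ‹MeasurableSpace Ω› :=
  iSup₂_le fun i _ => (hmeas i).comap_le

lemma comap_le_natFiltration {k : ℕ} {i : Fin n} (hi : (i : ℕ) < k) :
    MeasurableSpace.comap (X i) inferInstance ≤ natFiltration X k :=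
  le_iSup₂_of_le
    (f := fun (j : Fin n) (_ : (j : ℕ) < k) => MeasurableSpace.comap (X j) inferInstance)
    i hi le_rfl

lemma natFiltration_le_iSup_ne {k : ℕ} {i : Fin n} (hi : k ≤ i) :
    natFiltration X k ≤ ⨆ (j) (_ : j ≠ i), MeasurableSpace.comap (X j) inferInstance :=
  iSup₂_le fun j hj => le_iSup₂_of_le (f := fun j (_ : j ≠ i) =>
    MeasurableSpace.comap (X j) inferInstance) j (by rintro rfl; omega) le_rfl

theorem condExp_mul_sum_sub_natFiltration {μ : Measure Ω} [IsFiniteMeasure μ]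
    (hmeas : ∀ i, Measurable (X i)) (hindep : iIndepFun X μ) (hXi : ∀ i, Integrable (X i) μ)
    (k : ℕ) (i : Fin n) :
    μ[X i * (∑ j, X j - X i) | natFiltration X k]
      =ᵐ[μ] μ[X i | natFiltration X k] * μ[∑ j, X j - X i | natFiltration X k] := by
  rcases lt_or_ge (i : ℕ) k with hik | hki
  · have hXF :=
      ((comap_measurable (X i)).mono (comap_le_natFiltration hik) le_rfl).stronglyMeasurable
    rw [condExp_of_stronglyMeasurable (natFiltration_le hmeas k) hXF (hXi i)]
    exact condExp_mul_of_stronglyMeasurable_left hXF (hindep.integrable_mul_sum_sub hmeas hXi i)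
      ((integrable_finsetSum' _ fun j _ => hXi j).sub (hXi i))
  · exact condExp_mul_sum_sub_of_le_iSup_ne hmeas hindep hXi i (natFiltration_le_iSup_ne hki)

end NaturalFiltration

lemma integrable_mul_logStar_self {Ω : Type*} [MeasurableSpace Ω] {μ : Measure Ω} {f : Ω → ℝ}
    (hf : Measurable f) (hf0 : 0 ≤ f)
    (hfin : ∫⁻ ω, ENNReal.ofReal (f ω * logStar (f ω)) ∂μ ≠ ⊤) :
    Integrable (fun ω => f ω * logStar (f ω)) μ := by
  refine ⟨(hf.mul (measurable_logStar.comp hf)).aestronglyMeasurable, ?_⟩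
  rw [hasFiniteIntegral_iff_ofReal
    (ae_of_all _ fun ω => mul_nonneg (hf0 ω) (logStar_nonneg (hf0 ω)))]
  exact hfin.lt_top

theorem condexp_sum_mul_logStar_le_general
    {Ω : Type*} [MeasurableSpace Ω] (μ : Measure Ω) [IsProbabilityMeasure μ]
    (n : ℕ) (X : Fin n → Ω → ℝ)
    (hmeas : ∀ i, Measurable (X i))
    (hindep : iIndepFun X μ)
    (hnonneg : ∀ i ω, 0 ≤ X i ω)
    (hint : ∀ i, Integrable (X i) μ)
    (hllog : ∀ i, ∫⁻ ω, ENNReal.ofReal (X i ω * logStar (X i ω)) ∂ μ ≠ ⊤)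
    (q : ℕ) :
    ∀ᵐ ω ∂ μ,
      (μ[(fun ω' => (∑ i, X i ω') * logStar (∑ i, X i ω')) |
          natFiltration X (n - q)]) ω
        ≤ (μ[(fun ω' => ∑ i, X i ω') | natFiltration X (n - q)]) ω
            * logStar ((μ[(fun ω' => ∑ i, X i ω') | natFiltration X (n - q)]) ω)
          + ∑ i, (μ[(fun ω' => X i ω' * logStar (X i ω')) |
              natFiltration X (n - q)]) ω :=
  condExp_sum_mul_logStar_le_of_condExp_mul_le hnonneg hint
    (fun i => integrable_mul_logStar_self (hmeas i) (hnonneg i) (hllog i))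
    (hindep.integrable_mul_sum_sub hmeas hint)
    (fun i => (condExp_mul_sum_sub_natFiltration hmeas hindep hint (n - q) i).le)

/-- Conditional version of Lemma A.1: for independent nonnegative integrable random
variables `X₁, …, Xₙ` with `𝔼(Xᵢ log* Xᵢ) < ∞`, sum `Sₙ`, and natural filtration
`ℱ_k = σ(X₁,…,X_k)`, for every `0 ≤ q ≤ n`, almost surely
`𝔼(Sₙ log* Sₙ | ℱ_{n−q}) ≤ 𝔼(Sₙ | ℱ_{n−q})·log*(𝔼(Sₙ | ℱ_{n−q})) + Σᵢ 𝔼(Xᵢ log* Xᵢ | ℱ_{n−q})`. -/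
theorem condexp_sum_mul_logStar_le
    {Ω : Type*} [MeasurableSpace Ω] (μ : Measure Ω) [IsProbabilityMeasure μ]
    (n : ℕ) (X : Fin n → Ω → ℝ)
    (hmeas : ∀ i, Measurable (X i))
    (hindep : iIndepFun X μ)
    (hnonneg : ∀ i ω, 0 ≤ X i ω)
    (hint : ∀ i, Integrable (X i) μ)
    (hllog : ∀ i, ∫⁻ ω, ENNReal.ofReal (X i ω * logStar (X i ω)) ∂ μ ≠ ⊤)
    (q : ℕ) (hq : q ≤ n) :
    ∀ᵐ ω ∂ μ,
      (μ[(fun ω' => (∑ i, X i ω') * logStar (∑ i, X i ω')) |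
          natFiltration X (n - q)]) ω
        ≤ (μ[(fun ω' => ∑ i, X i ω') | natFiltration X (n - q)]) ω
            * logStar ((μ[(fun ω' => ∑ i, X i ω') | natFiltration X (n - q)]) ω)
          + ∑ i, (μ[(fun ω' => X i ω' * logStar (X i ω')) |
              natFiltration X (n - q)]) ω :=
  condexp_sum_mul_logStar_le_general μ n X hmeas hindep hnonneg hint hllog q

end
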